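/- arXiv:2203.10765 — 2 statements merged into one kernel-verified Lean document; each statement's English description precedes it below -/
import Mathlib

section
/- Fix real numbers TR, c_mine ≥ 0, n_TX > 0, c_val > 0, φ ≥ 0, penalties κ_R ≥ 0 and κ_i with κ_R ≤ κ_i, a gap bound δ_min > 0, and beliefs P₁, P₂ ∈ [0,1] with P₁ − P₂ ≥ δ_min. If the Maximum Payload Condition φ·c_val ≤ κ_R·δ_min holds, then TR − c_mine/n_TX − P₁·κ_i ≤ TR − φ·c_val − c_mine/n_TX − P₂·κ_i; that is, validating before signing yields at least as much utility as signing without validating for every rational node i. -/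
/-- Under the Maximum Payload Condition, validating before signing
yields at least as much utility as signing without validating. -/
theorem stmt_1 (TR c_mine n_TX c_val φ κ_R κ_i δ_min P₁ P₂ : ℝ)
    (hc_mine : 0 ≤ c_mine) (hn_TX : 0 < n_TX) (hc_val : 0 < c_val)
    (hφ : 0 ≤ φ) (hκ_R : 0 ≤ κ_R) (hκ : κ_R ≤ κ_i) (hδ : 0 < δ_min)
    (hP₁ : P₁ ∈ Set.Icc (0 : ℝ) 1) (hP₂ : P₂ ∈ Set.Icc (0 : ℝ) 1)
    (hgap : P₁ - P₂ ≥ δ_min)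
    (hMPC : φ * c_val ≤ κ_R * δ_min) :
    TR - c_mine / n_TX - P₁ * κ_i ≤ TR - φ * c_val - c_mine / n_TX - P₂ * κ_i := by
  nlinarith [mul_le_mul hκ hgap (le_of_lt hδ) (hκ_R.trans hκ)]
end

section
/- Fix real numbers c_mine ≥ 0, n_TX > 0, c_val > 0, φ ≥ 0, δ_min > 0, κ_R ≥ 0, per-node penalties κ_i ≥ κ_R, rewards TR_i ≥ TR, and beliefs P₁, P₂ ∈ [0,1] with P₁ − P₂ ≥ δ_min. If both the Maximum Payload Condition φ ≤ (κ_R·δ_min)/c_val and the Minimum Reward Condition TR ≥ φ·c_val + c_mine/n_TX hold, then for every rational node i: (a) TR_i − c_mine/n_TX − P₁·κ_i ≤ TR_i − φ·c_val − c_mine/n_TX − P₂·κ_i (validating is a best response against all others validating), and (b) when P₂ = 0 the resulting utility TR_i − φ·c_val − c_mine/n_TX is nonnegative. Hence the validating strategy profile is a pure strategy Nash equilibrium with nonnegative utilities, i.e., the protocol is Nash Incentive Compatible. -/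
/-- Under the Maximum Payload Condition and the Minimum Reward
Condition, validating is a best response and yields nonnegative utility, i.e.
the validating strategy profile is a pure strategy Nash equilibrium with
nonnegative utilities (Nash Incentive Compatibility). -/
theorem stmt_3 (c_mine n_TX c_val φ δ_min κ_R κ_i TR_i TR P₁ P₂ : ℝ)
    (hc_mine : 0 ≤ c_mine) (hn_TX : 0 < n_TX) (hc_val : 0 < c_val)
    (hφ : 0 ≤ φ) (hδ : 0 < δ_min) (hκ_R : 0 ≤ κ_R) (hκ : κ_i ≥ κ_R)
    (hTR : TR_i ≥ TR)
    (hP₁ : P₁ ∈ Set.Icc (0 : ℝ) 1) (hP₂ : P₂ ∈ Set.Icc (0 : ℝ) 1)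
    (hgap : P₁ - P₂ ≥ δ_min)
    (hMPC : φ ≤ κ_R * δ_min / c_val)
    (hMRC : TR ≥ φ * c_val + c_mine / n_TX) :
    (TR_i - c_mine / n_TX - P₁ * κ_i ≤ TR_i - φ * c_val - c_mine / n_TX - P₂ * κ_i)
      ∧ (P₂ = 0 → 0 ≤ TR_i - φ * c_val - c_mine / n_TX) := by
  constructor
  · have h1 : φ * c_val ≤ κ_R * δ_min := by
      rw [le_div_iff₀ hc_val] at hMPC
      exact hMPC
    have h2 : κ_R * δ_min ≤ κ_i * (P₁ - P₂) := by
      nlinarith [hκ_R.trans hκ]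
    nlinarith
  · intro _
    nlinarith
end
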